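/- Let (X,≤) be a partially ordered set and p a partial metric on X making (X,p) complete. Let f : X → X be monotone non-decreasing such that p(fx,fy) ≤ p(x,y) - ψ(p(x,y)) whenever y ≤ x, where ψ : [0,∞) → [0,∞) is continuous, non-decreasing, positive on (0,∞), with ψ(0) = 0 and ψ(t) → ∞ as t → ∞. Suppose that whenever a non-decreasing sequence {x_n} converges to x in (X,p), then x_n ≤ x for all n. If there exists x_0 with x_0 ≤ f(x_0), then f has a fixed point u with p(u,u) = 0. -/

import Mathlib

/-! The Picard iterates `xₙ = fⁿ x₀` form a non-decreasing sequence, so the contraction applies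
to every pair of them: `p(xₙ₊₁, xₘ₊₁) ≤ p(xₙ, xₘ) - ψ(p(xₙ, xₘ))`. Since `ψ → ∞`, the values
`p(xₙ, x₀)` stay bounded, say by `B`; and for `ε > 0` every tail step lowers all values above `ε`
by at least `ψ ε > 0`, so after `B / ψ ε` steps all of them lie below `ε`. The sequence is thus
Cauchy with limit `0`, and completeness yields `u` with `p(u, u) = 0` and `p(xₙ, u) → 0`. The
order hypothesis gives `xₙ ≤ u`, so `p(fu, u) ≤ p(u, xₙ) + p(xₙ₊₁, u) → 0`, whence `fu = u`. -/

noncomputable section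
open Filter Topology

def IsPartialMetric {X : Type*} (p : X → X → ℝ) : Prop :=
  (∀ x y, 0 ≤ p x y) ∧
  (∀ x y, x = y ↔ (p x x = p x y ∧ p x y = p y y)) ∧
  (∀ x y, p x x ≤ p x y) ∧
  (∀ x y, p x y = p y x) ∧
  (∀ x y z, p x y ≤ p x z + p z y - p z z)

/-- `u` converges to `x` in the partial metric space `(X, p)`. -/
def PConvergesTo {X : Type*} (p : X → X → ℝ) (u : ℕ → X) (x : X) : Prop :=
  Tendsto (fun n => p (u n) x) atTop (𝓝 (p x x))

/-- `u` converges properly to `x` in `(X, p)`. -/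
def PProperConvergesTo {X : Type*} (p : X → X → ℝ) (u : ℕ → X) (x : X) : Prop :=
  Tendsto (fun n => p (u n) x) atTop (𝓝 (p x x)) ∧
  Tendsto (fun n => p (u n) (u n)) atTop (𝓝 (p x x))

/-- `u` is a Cauchy sequence in `(X, p)`: `lim_{n,m} p (u n) (u m)` exists (finite). -/
def PCauchy {X : Type*} (p : X → X → ℝ) (u : ℕ → X) : Prop :=
  ∃ l : ℝ, Tendsto (fun nm : ℕ × ℕ => p (u nm.1) (u nm.2)) atTop (𝓝 l)

/-- `(X, p)` is a complete partial metric space. -/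
def PComplete {X : Type*} (p : X → X → ℝ) : Prop :=
  ∀ u : ℕ → X, ∀ l : ℝ,
    Tendsto (fun nm : ℕ × ℕ => p (u nm.1) (u nm.2)) atTop (𝓝 l) →
    ∃ x, p x x = l ∧ Tendsto (fun n => p (u n) x) atTop (𝓝 l)

/-- `f` is continuous on `(X, p)` (w.r.t. both `p` and the induced metric `pˢ`). -/
def PContinuousMap {X : Type*} (p : X → X → ℝ) (f : X → X) : Prop :=
  ∀ (u : ℕ → X) (x : X),
    (PConvergesTo p u x → PConvergesTo p (fun n => f (u n)) (f x)) ∧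
    (PProperConvergesTo p u x → PProperConvergesTo p (fun n => f (u n)) (f x))


namespace IsPartialMetric

variable {X : Type*} {p : X → X → ℝ}

theorem nonneg (hp : IsPartialMetric p) (x y : X) : 0 ≤ p x y := hp.1 x y

theorem symm (hp : IsPartialMetric p) (x y : X) : p x y = p y x := hp.2.2.2.1 x y

theorem triangle (hp : IsPartialMetric p) (x y z : X) : p x y ≤ p x z + p z y - p z z :=
  hp.2.2.2.2 x y z

theorem le_add (hp : IsPartialMetric p) (x y z : X) : p x y ≤ p x z + p z y := by
  linarith [hp.triangle x y z, hp.nonneg z z]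

theorem eq_of_eq_zero (hp : IsPartialMetric p) {x y : X} (h : p x y = 0) : x = y := by
  have hx : p x x = 0 := le_antisymm (h ▸ hp.2.2.1 x y) (hp.nonneg x x)
  have hy : p y y = 0 := le_antisymm (h ▸ hp.symm x y ▸ hp.2.2.1 y x) (hp.nonneg y y)
  exact (hp.2.1 x y).2 ⟨hx.trans h.symm, h.trans hy.symm⟩

theorem map_le_sub_of_le_or_le [Preorder X] (hp : IsPartialMetric p) {f : X → X} {ψ : ℝ → ℝ}
    (hcontr : ∀ x y : X, y ≤ x → p (f x) (f y) ≤ p x y - ψ (p x y)) {x y : X}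
    (hxy : x ≤ y ∨ y ≤ x) : p (f x) (f y) ≤ p x y - ψ (p x y) := by
  rcases hxy with hxy | hxy
  · rw [hp.symm (f x), hp.symm x]
    exact hcontr y x hxy
  · exact hcontr x y hxy

/-- Bounding `p(xₙ, x₀)` by induction: a large value is lowered by `ψ` by more than the
`p(x₁, x₀)` lost in the triangle inequality through `x₁`. -/
theorem exists_bound_of_le_sub (hp : IsPartialMetric p) {ψ : ℝ → ℝ}
    (hψnn : ∀ t, 0 ≤ t → 0 ≤ ψ t) (hψtop : Tendsto ψ atTop atTop) {x : ℕ → X}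
    (hstep : ∀ n m, p (x (n + 1)) (x (m + 1)) ≤ p (x n) (x m) - ψ (p (x n) (x m))) :
    ∃ B, ∀ n m, p (x n) (x m) ≤ B := by
  set A := p (x 1) (x 0)
  obtain ⟨M, hM⟩ := (hψtop.eventually_ge_atTop A).exists_forall_of_atTop
  have hbound : ∀ n, p (x n) (x 0) ≤ max (p (x 0) (x 0)) (M + A) := by
    intro n
    induction n with
    | zero => exact le_max_left _ _
    | succ k ih =>
      have hle : p (x (k + 1)) (x 0) ≤ p (x k) (x 0) - ψ (p (x k) (x 0)) + A :=
        (hp.le_add _ _ (x 1)).trans (by gcongr; exact hstep k 0)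
      rcases le_total (p (x k) (x 0)) M with hk | hk
      · have := hψnn _ (hp.nonneg (x k) (x 0))
        exact le_max_of_le_right (by linarith)
      · linarith [hM _ hk]
  refine ⟨2 * max (p (x 0) (x 0)) (M + A), fun n m => ?_⟩
  linarith [hp.le_add (x n) (x m) (x 0), hp.symm (x 0) (x m), hbound n, hbound m]

end IsPartialMetric

section DoubleSequence

variable {d : ℕ → ℕ → ℝ} {ψ : ℝ → ℝ} {B : ℝ}

theorem le_max_sub_mul_of_le_sub (hψm : MonotoneOn ψ (Set.Ici 0))
    (hψnn : ∀ t, 0 ≤ t → 0 ≤ ψ t) (hd : ∀ n m, 0 ≤ d n m) (hB : ∀ n m, d n m ≤ B)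
    (hstep : ∀ n m, d (n + 1) (m + 1) ≤ d n m - ψ (d n m)) {ε : ℝ} (hε : 0 ≤ ε) :
    ∀ j n m, d (n + j) (m + j) ≤ max ε (B - j * ψ ε) := by
  intro j
  induction j with
  | zero => exact fun n m => le_max_of_le_right (by simpa using hB n m)
  | succ j ih =>
    intro n m
    set t := d (n + j) (m + j)
    have ht := hd (n + j) (m + j)
    have hnext : d (n + (j + 1)) (m + (j + 1)) ≤ t - ψ t := hstep (n + j) (m + j)
    rcases le_or_gt t ε with htε | htε
    · exact le_max_of_le_left (by linarith [hψnn t ht])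
    · have hψ : ψ ε ≤ ψ t := hψm hε ht htε.le
      have hmax : t ≤ B - j * ψ ε := (le_max_iff.1 (ih n m)).resolve_left htε.not_ge
      exact le_max_of_le_right (by push_cast; linarith)

theorem tendsto_zero_of_le_sub (hψm : MonotoneOn ψ (Set.Ici 0))
    (hψnn : ∀ t, 0 ≤ t → 0 ≤ ψ t) (hψpos : ∀ t, 0 < t → 0 < ψ t)
    (hd : ∀ n m, 0 ≤ d n m) (hB : ∀ n m, d n m ≤ B)
    (hstep : ∀ n m, d (n + 1) (m + 1) ≤ d n m - ψ (d n m)) :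
    Tendsto (fun nm : ℕ × ℕ => d nm.1 nm.2) atTop (𝓝 0) := by
  rw [Metric.tendsto_atTop]
  intro ε hε
  have hc : 0 < ψ (ε / 2) := hψpos _ (by positivity)
  obtain ⟨j, hj⟩ := exists_nat_ge (B / ψ (ε / 2))
  refine ⟨(j, j), fun ⟨n, m⟩ ⟨hn, hm⟩ => ?_⟩
  obtain ⟨n, rfl⟩ := Nat.exists_eq_add_of_le' hn
  obtain ⟨m, rfl⟩ := Nat.exists_eq_add_of_le' hm
  have hjB : B - j * ψ (ε / 2) ≤ ε / 2 := by
    have := (div_le_iff₀ hc).1 hj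
    linarith
  have := le_max_sub_mul_of_le_sub hψm hψnn hd hB hstep (by positivity : 0 ≤ ε / 2) j n m
  rw [Real.dist_0_eq_abs, abs_of_nonneg (hd _ _)]
  linarith [max_le (le_refl (ε / 2)) hjB]

end DoubleSequence

theorem fixed_point_order_limit_case_general {X : Type*} [PartialOrder X] (p : X → X → ℝ)
    (hp : IsPartialMetric p) (hcomp : PComplete p)
    (f : X → X) (hf : Monotone f)
    (ψ : ℝ → ℝ) (hψm : MonotoneOn ψ (Set.Ici 0))
    (hψpos : ∀ t : ℝ, 0 < t → 0 < ψ t) (hψ0 : ψ 0 = 0)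
    (hψtop : Tendsto ψ atTop atTop)
    (hcontr : ∀ x y : X, y ≤ x → p (f x) (f y) ≤ p x y - ψ (p x y))
    (hord : ∀ (u : ℕ → X) (x : X), Monotone u → PConvergesTo p u x → ∀ n, u n ≤ x)
    (x₀ : X) (hx₀ : x₀ ≤ f x₀) :
    ∃ u : X, f u = u ∧ p u u = 0 := by
  have hψnn : ∀ t, 0 ≤ t → 0 ≤ ψ t := fun t ht => hψ0 ▸ hψm Set.self_mem_Ici ht ht
  set x : ℕ → X := fun n => f^[n] x₀
  have hxsucc : ∀ n, x (n + 1) = f (x n) := fun n => Function.iterate_succ_apply' f n x₀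
  have hxmono : Monotone x := hf.monotone_iterate_of_le_map hx₀
  have hstep : ∀ n m, p (x (n + 1)) (x (m + 1)) ≤ p (x n) (x m) - ψ (p (x n) (x m)) :=
    fun n m => hxsucc n ▸ hxsucc m ▸
      hp.map_le_sub_of_le_or_le hcontr ((le_total n m).imp (@hxmono n m) (@hxmono m n))
  obtain ⟨B, hB⟩ := hp.exists_bound_of_le_sub hψnn hψtop hstep
  obtain ⟨u, hu, hxu⟩ := hcomp x 0 <|
    tendsto_zero_of_le_sub hψm hψnn hψpos (fun n m => hp.nonneg _ _) hB hstep
  have hxle : ∀ n, x n ≤ u := hord x u hxmono (by rw [PConvergesTo, hu]; exact hxu)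
  have hbound : ∀ n, p (f u) u ≤ p (x n) u + p (x (n + 1)) u := fun n => by
    have hfu : p (f u) (x (n + 1)) ≤ p u (x n) - ψ (p u (x n)) :=
      hxsucc n ▸ hcontr u (x n) (hxle n)
    linarith [hp.le_add (f u) u (x (n + 1)), hp.symm u (x n), hψnn _ (hp.nonneg u (x n))]
  have hlim : Tendsto (fun n => p (x n) u + p (x (n + 1)) u) atTop (𝓝 0) := by
    simpa using hxu.add (hxu.comp (tendsto_add_atTop_nat 1))
  have hfu : p (f u) u = 0 := le_antisymm (ge_of_tendsto' hlim hbound) (hp.nonneg _ _)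
  exact ⟨u, hp.eq_of_eq_zero hfu, hu⟩

theorem fixed_point_order_limit_case {X : Type*} [PartialOrder X] (p : X → X → ℝ)
    (hp : IsPartialMetric p) (hcomp : PComplete p)
    (f : X → X) (hf : Monotone f)
    (ψ : ℝ → ℝ) (hψc : ContinuousOn ψ (Set.Ici 0)) (hψm : MonotoneOn ψ (Set.Ici 0))
    (hψpos : ∀ t : ℝ, 0 < t → 0 < ψ t) (hψ0 : ψ 0 = 0)
    (hψtop : Tendsto ψ atTop atTop)
    (hcontr : ∀ x y : X, y ≤ x → p (f x) (f y) ≤ p x y - ψ (p x y))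
    (hord : ∀ (u : ℕ → X) (x : X), Monotone u → PConvergesTo p u x → ∀ n, u n ≤ x)
    (x₀ : X) (hx₀ : x₀ ≤ f x₀) :
    ∃ u : X, f u = u ∧ p u u = 0 :=
  fixed_point_order_limit_case_general p hp hcomp f hf ψ hψm hψpos hψ0 hψtop hcontr hord x₀ hx₀
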